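/- Let X₂, …, Xₙ be i.i.d. uniform on the unit circle 𝕊¹ and let 0 ≤ r < 1. Then for every 1 ≤ k ≤ n−1, E[ | Σ_{2 ≤ i₁ < i₂ < … < i_k ≤ n} ∏_{m=1}^{k} 1/(r − X_{i_m}) |² ] = binom(n−1, k) · (1 − r²)^{−k}. -/

import Mathlib

/-!
For `Yⱼ = (r - Xⱼ)⁻¹` the products `∏_{j ∈ s} Yⱼ` over index sets `s` are orthogonal in `L²`:
by independence, `E[∏_{s} Y · conj (∏_{t} Y)]` factors over `s ∪ t`; an index in exactly one of
`s`, `t` contributes `E Yⱼ = 0` or its conjugate, while for `s = t` every factor is `E |Yⱼ|²`.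
Both moments are circle averages. On the unit circle `(w - z)⁻¹ = g (z⁻¹)` with
`g z = z / (w z - 1)` holomorphic on the closed disc, and inversion preserves circle averages, so
`E Yⱼ = g 0 = 0` by the mean value property; `E |Yⱼ|² = (1 - r²)⁻¹` is the Poisson integral formula
for the constant function `1`, whose kernel on the circle is `(1 - |w|²) / |z - w|²`.
-/

open MeasureTheory ProbabilityTheory Real

/-- The uniform probability measure on the unit circle `𝕊¹ ⊂ ℂ`. -/
noncomputable def unifCircle : Measure ℂ :=
  Measure.map (fun θ : ℝ => Complex.exp (θ * Complex.I))
    ((volume (Set.Ioc (0 : ℝ) (2 * π)))⁻¹ • volume.restrict (Set.Ioc (0 : ℝ) (2 * π)))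

open Metric ComplexConjugate
open scoped symmDiff

lemma Finset.prod_mul_prod_eq_prod_union_ite {ι M : Type*} [CommMonoid M] [DecidableEq ι]
    (f g : ι → M) (s t : Finset ι) :
    (∏ i ∈ s, f i) * ∏ i ∈ t, g i =
      ∏ i ∈ s ∪ t, (if i ∈ s then f i else 1) * (if i ∈ t then g i else 1) := by
  rw [Finset.prod_mul_distrib, Finset.prod_ite_mem, Finset.prod_ite_mem,
    Finset.union_inter_cancel_left, Finset.union_inter_cancel_right]

lemma ProbabilityTheory.iIndepFun.integral_finset_prod_eq_prod_integral {Ω ι 𝕜 : Type*}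
    [RCLike 𝕜] [MeasurableSpace Ω] {μ : Measure Ω} {Y : ι → Ω → 𝕜} (hY : iIndepFun Y μ)
    (hm : ∀ i, AEStronglyMeasurable (Y i) μ) (u : Finset ι) :
    ∫ ω, ∏ i ∈ u, Y i ω ∂μ = ∏ i ∈ u, ∫ ω, Y i ω ∂μ := by
  simp_rw [← Finset.prod_coe_sort u]
  exact (hY.restrict u).integral_fun_prod_eq_prod_integral fun i ↦ hm i

section Orthogonality

variable {Ω ι : Type*} [MeasurableSpace Ω] {P : Measure Ω} {Y : ι → Ω → ℂ}

theorem integral_prod_mul_conj_prod [DecidableEq ι] (hY : iIndepFun Y P)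
    (hm : ∀ i, AEStronglyMeasurable (Y i) P) (hmean : ∀ i, ∫ ω, Y i ω ∂P = 0)
    (s t : Finset ι) :
    ∫ ω, (∏ i ∈ s, Y i ω) * conj (∏ i ∈ t, Y i ω) ∂P =
      if s = t then ∏ i ∈ s, ((∫ ω, ‖Y i ω‖ ^ 2 ∂P : ℝ) : ℂ) else 0 := by
  set φ : ι → ℂ → ℂ := fun i z ↦ (if i ∈ s then z else 1) * (if i ∈ t then conj z else 1)
  have hφ : ∀ i, Measurable (φ i) := fun i ↦ by
    refine Measurable.mul ?_ ?_ <;> split_ifs <;> fun_prop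
  have hfactor : ∀ ω, (∏ i ∈ s, Y i ω) * conj (∏ i ∈ t, Y i ω) = ∏ i ∈ s ∪ t, φ i (Y i ω) :=
    fun ω ↦ by rw [map_prod]; exact Finset.prod_mul_prod_eq_prod_union_ite _ _ s t
  simp_rw [hfactor]
  have hindep := (hY.comp φ hφ).integral_finset_prod_eq_prod_integral
    (fun i ↦ ((hφ i).comp_aemeasurable (hm i).aemeasurable).aestronglyMeasurable) (s ∪ t)
  simp only [Function.comp_apply] at hindep
  rw [hindep]
  split_ifs with hst
  · subst hst
    refine Finset.prod_congr (Finset.union_self s) fun i hi ↦ ?_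
    simp only [φ, if_pos hi, Complex.mul_conj', ← Complex.ofReal_pow, integral_complex_ofReal]
  · obtain ⟨i, hi⟩ : (s ∆ t).Nonempty :=
      Finset.nonempty_iff_ne_empty.2 (symmDiff_eq_bot.not.2 hst)
    refine Finset.prod_eq_zero (Finset.symmDiff_subset_union hi) ?_
    rcases Finset.mem_symmDiff.1 hi with ⟨his, hit⟩ | ⟨hit, his⟩
    · simp [φ, his, hit, hmean]
    · simp [φ, his, hit, integral_conj, hmean]

theorem integral_norm_sum_prod_sq (hY : iIndepFun Y P) (hbdd : ∀ i, MemLp (Y i) ⊤ P)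
    (hmean : ∀ i, ∫ ω, Y i ω ∂P = 0) (S : Finset (Finset ι)) :
    ∫ ω, ‖∑ s ∈ S, ∏ i ∈ s, Y i ω‖ ^ 2 ∂P = ∑ s ∈ S, ∏ i ∈ s, ∫ ω, ‖Y i ω‖ ^ 2 ∂P := by
  classical
  have := hY.isProbabilityMeasure
  have hprod : ∀ s : Finset ι, MemLp (fun ω ↦ ∏ i ∈ s, Y i ω) ⊤ P := fun s ↦ by
    simpa using MemLp.prod' (p := fun _ ↦ ⊤) fun i _ ↦ hbdd i
  have hint : ∀ s t : Finset ι,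
      Integrable (fun ω ↦ (∏ i ∈ s, Y i ω) * conj (∏ i ∈ t, Y i ω)) P := fun s t ↦
    ((hprod t).star.mul (hprod s)).integrable le_top
  apply Complex.ofReal_injective
  calc ((∫ ω, ‖∑ s ∈ S, ∏ i ∈ s, Y i ω‖ ^ 2 ∂P : ℝ) : ℂ)
      = ∫ ω, ∑ s ∈ S, ∑ t ∈ S, (∏ i ∈ s, Y i ω) * conj (∏ i ∈ t, Y i ω) ∂P := by
        rw [← integral_complex_ofReal]
        congr 1 with ω
        push_cast
        rw [← Complex.mul_conj', map_sum, Finset.sum_mul_sum]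
    _ = ∑ s ∈ S, ∑ t ∈ S, if s = t then ∏ i ∈ s, ((∫ ω, ‖Y i ω‖ ^ 2 ∂P : ℝ) : ℂ) else 0 := by
        rw [integral_finsetSum _ fun s _ ↦ integrable_finsetSum _ fun t _ ↦ hint s t]
        refine Finset.sum_congr rfl fun s _ ↦ ?_
        rw [integral_finsetSum _ fun t _ ↦ hint s t]
        exact Finset.sum_congr rfl fun t _ ↦
          integral_prod_mul_conj_prod hY (fun i ↦ (hbdd i).1) hmean s t
    _ = _ := by simp [Finset.sum_ite_eq]

end Orthogonality

lemma circleAverage_inv_sub {w : ℂ} (hw : w ∈ ball (0 : ℂ) 1) :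
    circleAverage (fun z ↦ (w - z)⁻¹) 0 1 = 0 := by
  have hne : ∀ z ∈ closedBall (0 : ℂ) 1, w * z - 1 ≠ 0 := by
    intro z hz h
    have h1 : ‖w * z‖ < 1 := by
      rw [norm_mul]
      exact mul_lt_one_of_nonneg_of_lt_one_left (norm_nonneg w) (mem_ball_zero_iff.1 hw)
        (mem_closedBall_zero_iff.1 hz)
    rw [sub_eq_zero.1 h, norm_one] at h1
    exact lt_irrefl _ h1
  have hg : DiffContOnCl ℂ (fun z ↦ z / (w * z - 1)) (ball (0 : ℂ) |1|) := by
    apply DifferentiableOn.diffContOnCl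
    rw [abs_one, closure_ball _ one_ne_zero]
    exact differentiableOn_id.div (by fun_prop) hne
  calc circleAverage (fun z ↦ (w - z)⁻¹) 0 1
      = circleAverage (fun z ↦ z⁻¹ / (w * z⁻¹ - 1)) 0 1 := by
        refine circleAverage_congr_sphere fun z hz ↦ ?_
        have hz0 : z ≠ 0 := by rintro rfl; simp at hz
        field_simp
    _ = 0 := by
        rw [circleAverage_zero_one_congr_inv (f := fun z ↦ z / (w * z - 1)), hg.circleAverage]
        simp

lemma circleAverage_norm_inv_sub_sq {w : ℂ} (hw : w ∈ ball (0 : ℂ) 1) :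
    circleAverage (fun z ↦ ‖(w - z)⁻¹‖ ^ 2) 0 1 = (1 - ‖w‖ ^ 2)⁻¹ := by
  have hP := InnerProductSpace.HarmonicContOnCl.circleAverage_poissonKernel_smul
    (InnerProductSpace.harmonicContOnCl_const (c := (1 : ℝ)) (s := ball (0 : ℂ) 1)) hw
  calc circleAverage (fun z ↦ ‖(w - z)⁻¹‖ ^ 2) 0 1
      = circleAverage ((1 - ‖w‖ ^ 2)⁻¹ • (poissonKernel 0 w • fun _ ↦ (1 : ℝ))) 0 1 := by
        refine circleAverage_congr_sphere fun z hz ↦ ?_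
        have hz1 : ‖z‖ = 1 := by simpa using hz
        have hw1 : 1 - ‖w‖ ^ 2 ≠ 0 := by
          have := mem_ball_zero_iff.1 hw
          nlinarith [norm_nonneg w]
        simp only [Pi.smul_apply, smul_eq_mul, Pi.mul_apply, mul_one, poissonKernel, sub_zero, hz1,
          norm_inv, inv_pow, norm_sub_rev z w]
        field_simp
    _ = (1 - ‖w‖ ^ 2)⁻¹ := by rw [circleAverage_smul, hP, smul_eq_mul, mul_one]

lemma integral_unifCircle {E : Type*} [NormedAddCommGroup E] [NormedSpace ℝ E] {f : ℂ → E}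
    (hf : AEStronglyMeasurable f unifCircle) :
    ∫ z, f z ∂unifCircle = circleAverage f 0 1 := by
  have hexp : Measurable fun θ : ℝ ↦ Complex.exp (θ * Complex.I) := by fun_prop
  rw [unifCircle, integral_map hexp.aemeasurable hf, integral_smul_measure, circleAverage_def,
    intervalIntegral.integral_of_le (by positivity), Real.volume_Ioc, sub_zero,
    ENNReal.toReal_inv, ENNReal.toReal_ofReal (by positivity)]
  simp [circleMap]

lemma ae_mem_sphere_unifCircle : ∀ᵐ z ∂unifCircle, z ∈ sphere (0 : ℂ) 1 := by
  have hexp : Measurable fun θ : ℝ ↦ Complex.exp (θ * Complex.I) := by fun_prop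
  exact (ae_map_iff hexp.aemeasurable isClosed_sphere.measurableSet).2
    (ae_of_all _ fun θ ↦ by simp)

section UniformOnCircle

variable {Ω : Type*} [MeasurableSpace Ω] {P : Measure Ω} {X : Ω → ℂ}
  (hX : AEMeasurable X P) (hlaw : P.map X = unifCircle)
include hX hlaw

lemma integral_comp_eq_circleAverage {E : Type*} [NormedAddCommGroup E] [NormedSpace ℝ E]
    {f : ℂ → E} (hf : AEStronglyMeasurable f unifCircle) :
    ∫ ω, f (X ω) ∂P = circleAverage f 0 1 := by
  rw [← integral_map hX (hlaw ▸ hf), hlaw, integral_unifCircle hf]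

lemma memLp_top_inv_sub [IsFiniteMeasure P] {w : ℂ} (hw : w ∈ ball (0 : ℂ) 1) :
    MemLp (fun ω ↦ (w - X ω)⁻¹) ⊤ P := by
  have hw' : ‖w‖ < 1 := mem_ball_zero_iff.1 hw
  refine MemLp.of_bound (by fun_prop) (1 - ‖w‖)⁻¹ ?_
  filter_upwards [ae_of_ae_map hX (hlaw ▸ ae_mem_sphere_unifCircle)] with ω hω
  have hgap : 1 - ‖w‖ ≤ ‖w - X ω‖ := by
    simpa [norm_sub_rev, mem_sphere_zero_iff_norm.1 hω] using norm_sub_norm_le (X ω) w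
  rw [norm_inv]
  exact inv_anti₀ (by linarith) hgap

lemma integral_inv_sub {w : ℂ} (hw : w ∈ ball (0 : ℂ) 1) :
    ∫ ω, (w - X ω)⁻¹ ∂P = 0 := by
  rw [integral_comp_eq_circleAverage hX hlaw (f := fun z ↦ (w - z)⁻¹) (by fun_prop),
    circleAverage_inv_sub hw]

lemma integral_norm_inv_sub_sq {w : ℂ} (hw : w ∈ ball (0 : ℂ) 1) :
    ∫ ω, ‖(w - X ω)⁻¹‖ ^ 2 ∂P = (1 - ‖w‖ ^ 2)⁻¹ := by
  rw [integral_comp_eq_circleAverage hX hlaw (f := fun z ↦ ‖(w - z)⁻¹‖ ^ 2) (by fun_prop),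
    circleAverage_norm_inv_sub_sq hw]

end UniformOnCircle

theorem second_moment_symmetric_sum
    {Ω : Type*} [MeasurableSpace Ω] (P : Measure Ω) [IsProbabilityMeasure P]
    (X : ℕ → Ω → ℂ) (hmeas : ∀ i, Measurable (X i))
    (hindep : iIndepFun X P)
    (hdist : ∀ i, Measure.map (X i) P = unifCircle)
    (n : ℕ) (r : ℝ) (hr₀ : 0 ≤ r) (hr₁ : r < 1)
    (k : ℕ) :
    ∫ ω, ‖∑ s ∈ Finset.powersetCard k (Finset.Icc 2 n),
        ∏ j ∈ s, ((r : ℂ) - X j ω)⁻¹‖ ^ 2 ∂P =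
      (Nat.choose (n - 1) k : ℝ) * ((1 - r ^ 2)⁻¹) ^ k := by
  have hr : (r : ℂ) ∈ ball (0 : ℂ) 1 := by simpa [abs_of_nonneg hr₀] using hr₁
  have hnorm : ‖(r : ℂ)‖ = r := by simp [abs_of_nonneg hr₀]
  rw [integral_norm_sum_prod_sq (Y := fun j ω ↦ ((r : ℂ) - X j ω)⁻¹)
    (hindep.comp (fun _ z ↦ ((r : ℂ) - z)⁻¹) fun _ ↦ by fun_prop)
    (fun j ↦ memLp_top_inv_sub (hmeas j).aemeasurable (hdist j) hr)
    (fun j ↦ integral_inv_sub (hmeas j).aemeasurable (hdist j) hr)]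
  simp only [integral_norm_inv_sub_sq (hmeas _).aemeasurable (hdist _) hr, hnorm]
  rw [Finset.sum_congr rfl fun s hs ↦ by rw [Finset.prod_const, (Finset.mem_powersetCard.1 hs).2],
    Finset.sum_const, Finset.card_powersetCard, Nat.card_Icc, nsmul_eq_mul,
    show n + 1 - 2 = n - 1 by omega]
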